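/- arXiv:2006.09698 — 3 statements merged into one kernel-verified Lean document; each statement's English description precedes it below -/
import Mathlib

section
/- The isosceles right triangle with legs of length 4, namely the convex hull of {(0,0),(4,0),(0,4)} in ℝ², is a tangram. -/
noncomputable section

/-- The Euclidean plane ℝ². -/
abbrev Plane : Type := EuclideanSpace ℝ (Fin 2)

/-- The point (x, y) of the Euclidean plane. -/
def pt (x y : ℝ) : Plane := (WithLp.equiv 2 (Fin 2 → ℝ)).symm ![x, y]

/-- The seven tans: two small triangles, one medium triangle, two large triangles,
the square and the parallelogram. -/
def tanPiece : Fin 7 → Set Plane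
  | 0 => convexHull ℝ {pt 0 0, pt 1 0, pt 0 1}
  | 1 => convexHull ℝ {pt 0 0, pt 1 0, pt 0 1}
  | 2 => convexHull ℝ {pt 0 0, pt (Real.sqrt 2) 0, pt 0 (Real.sqrt 2)}
  | 3 => convexHull ℝ {pt 0 0, pt 2 0, pt 0 2}
  | 4 => convexHull ℝ {pt 0 0, pt 2 0, pt 0 2}
  | 5 => convexHull ℝ {pt 0 0, pt 1 0, pt 1 1, pt 0 1}
  | 6 => convexHull ℝ {pt 0 0, pt 1 0, pt 2 1, pt 1 1}

/-- A set `T ⊆ ℝ²` is a tangram if there are isometries `g 0, …, g 6` of the plane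
such that `T` is the union of the images `g i '' tanPiece i` and these images have
pairwise disjoint interiors. -/
def IsTangram (T : Set Plane) : Prop :=
  ∃ g : Fin 7 → (Plane ≃ᵢ Plane),
    T = ⋃ i, (g i) '' tanPiece i ∧
    Pairwise fun i j =>
      Disjoint (interior ((g i) '' tanPiece i)) (interior ((g j) '' tanPiece j))

/-! ### Auxiliary material -/

@[simp] lemma pt_apply0 (a b : ℝ) : pt a b 0 = a := rfl
@[simp] lemma pt_apply1 (a b : ℝ) : pt a b 1 = b := rfl

lemma plane_ext {p q : Plane} (h0 : p 0 = q 0) (h1 : p 1 = q 1) : p = q := by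
  ext i; fin_cases i <;> assumption

@[simp] lemma plane_add_apply (p q : Plane) (i : Fin 2) : (p + q) i = p i + q i := rfl
@[simp] lemma plane_smul_apply (c : ℝ) (p : Plane) (i : Fin 2) : (c • p) i = c * p i := rfl

/-! #### Linear functionals and interiors of half-planes -/

lemma isLinearMap_coord (i : Fin 2) : IsLinearMap ℝ (fun p : Plane => p i) :=
  ⟨fun _ _ => rfl, fun _ _ => rfl⟩
lemma isLinearMap_sum : IsLinearMap ℝ (fun p : Plane => p 0 + p 1) :=
  ⟨fun p q => show (p 0 + q 0) + (p 1 + q 1) = _ by ring,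
   fun c a => show c * a 0 + c * a 1 = c * (a 0 + a 1) by ring⟩
lemma isLinearMap_diff : IsLinearMap ℝ (fun p : Plane => p 0 - p 1) :=
  ⟨fun p q => show (p 0 + q 0) - (p 1 + q 1) = _ by ring,
   fun c a => show c * a 0 - c * a 1 = c * (a 0 - a 1) by ring⟩

open Set in
lemma interior_coord_le (i : Fin 2) (c : ℝ) :
    interior {p : Plane | p i ≤ c} = {p : Plane | p i < c} := by
  let f : (Π _ : Fin 2, ℝ) →L[ℝ] ℝ := ContinuousLinearMap.proj i
  change interior ((f.comp (PiLp.continuousLinearEquiv 2 ℝ (fun _ : Fin 2 => ℝ) : Plane →L[ℝ] (Fin 2 → ℝ))) ⁻¹' Set.Iic c) = (f.comp (PiLp.continuousLinearEquiv 2 ℝ (fun _ : Fin 2 => ℝ) : Plane →L[ℝ] (Fin 2 → ℝ))) ⁻¹' Set.Iio c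
  rw [(f.comp (PiLp.continuousLinearEquiv 2 ℝ (fun _ : Fin 2 => ℝ) : Plane →L[ℝ] (Fin 2 → ℝ))).interior_preimage ((Function.surjective_eval i).comp (PiLp.continuousLinearEquiv 2 ℝ (fun _ : Fin 2 => ℝ)).surjective), interior_Iic]

open Set in
lemma interior_coord_ge (i : Fin 2) (c : ℝ) :
    interior {p : Plane | c ≤ p i} = {p : Plane | c < p i} := by
  let f : (Π _ : Fin 2, ℝ) →L[ℝ] ℝ := ContinuousLinearMap.proj i
  change interior ((f.comp (PiLp.continuousLinearEquiv 2 ℝ (fun _ : Fin 2 => ℝ) : Plane →L[ℝ] (Fin 2 → ℝ))) ⁻¹' Set.Ici c) = (f.comp (PiLp.continuousLinearEquiv 2 ℝ (fun _ : Fin 2 => ℝ) : Plane →L[ℝ] (Fin 2 → ℝ))) ⁻¹' Set.Ioi c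
  rw [(f.comp (PiLp.continuousLinearEquiv 2 ℝ (fun _ : Fin 2 => ℝ) : Plane →L[ℝ] (Fin 2 → ℝ))).interior_preimage ((Function.surjective_eval i).comp (PiLp.continuousLinearEquiv 2 ℝ (fun _ : Fin 2 => ℝ)).surjective), interior_Ici]

def fsum : (Π _ : Fin 2, ℝ) →L[ℝ] ℝ :=
  (ContinuousLinearMap.proj 0 : (Π _ : Fin 2, ℝ) →L[ℝ] ℝ) +
  (ContinuousLinearMap.proj 1 : (Π _ : Fin 2, ℝ) →L[ℝ] ℝ)
def fdiff : (Π _ : Fin 2, ℝ) →L[ℝ] ℝ :=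
  (ContinuousLinearMap.proj 0 : (Π _ : Fin 2, ℝ) →L[ℝ] ℝ) -
  (ContinuousLinearMap.proj 1 : (Π _ : Fin 2, ℝ) →L[ℝ] ℝ)

lemma fsum_surj : Function.Surjective fsum := by
  intro c; exact ⟨fun _ => c/2, by simp [fsum]⟩
lemma fdiff_surj : Function.Surjective fdiff := by
  intro c; refine ⟨![c, 0], ?_⟩; simp [fdiff]

open Set in
lemma interior_sum_le (c : ℝ) :
    interior {p : Plane | p 0 + p 1 ≤ c} = {p : Plane | p 0 + p 1 < c} := by
  change interior ((fsum.comp (PiLp.continuousLinearEquiv 2 ℝ (fun _ : Fin 2 => ℝ) : Plane →L[ℝ] (Fin 2 → ℝ))) ⁻¹' Set.Iic c) = (fsum.comp (PiLp.continuousLinearEquiv 2 ℝ (fun _ : Fin 2 => ℝ) : Plane →L[ℝ] (Fin 2 → ℝ))) ⁻¹' Set.Iio c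
  rw [(fsum.comp (PiLp.continuousLinearEquiv 2 ℝ (fun _ : Fin 2 => ℝ) : Plane →L[ℝ] (Fin 2 → ℝ))).interior_preimage (fsum_surj.comp (PiLp.continuousLinearEquiv 2 ℝ (fun _ : Fin 2 => ℝ)).surjective), interior_Iic]

open Set in
lemma interior_sum_ge (c : ℝ) :
    interior {p : Plane | c ≤ p 0 + p 1} = {p : Plane | c < p 0 + p 1} := by
  change interior ((fsum.comp (PiLp.continuousLinearEquiv 2 ℝ (fun _ : Fin 2 => ℝ) : Plane →L[ℝ] (Fin 2 → ℝ))) ⁻¹' Set.Ici c) = (fsum.comp (PiLp.continuousLinearEquiv 2 ℝ (fun _ : Fin 2 => ℝ) : Plane →L[ℝ] (Fin 2 → ℝ))) ⁻¹' Set.Ioi c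
  rw [(fsum.comp (PiLp.continuousLinearEquiv 2 ℝ (fun _ : Fin 2 => ℝ) : Plane →L[ℝ] (Fin 2 → ℝ))).interior_preimage (fsum_surj.comp (PiLp.continuousLinearEquiv 2 ℝ (fun _ : Fin 2 => ℝ)).surjective), interior_Ici]

open Set in
lemma interior_diff_le (c : ℝ) :
    interior {p : Plane | p 0 - p 1 ≤ c} = {p : Plane | p 0 - p 1 < c} := by
  change interior ((fdiff.comp (PiLp.continuousLinearEquiv 2 ℝ (fun _ : Fin 2 => ℝ) : Plane →L[ℝ] (Fin 2 → ℝ))) ⁻¹' Set.Iic c) = (fdiff.comp (PiLp.continuousLinearEquiv 2 ℝ (fun _ : Fin 2 => ℝ) : Plane →L[ℝ] (Fin 2 → ℝ))) ⁻¹' Set.Iio c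
  rw [(fdiff.comp (PiLp.continuousLinearEquiv 2 ℝ (fun _ : Fin 2 => ℝ) : Plane →L[ℝ] (Fin 2 → ℝ))).interior_preimage (fdiff_surj.comp (PiLp.continuousLinearEquiv 2 ℝ (fun _ : Fin 2 => ℝ)).surjective), interior_Iic]

open Set in
lemma interior_diff_ge (c : ℝ) :
    interior {p : Plane | c ≤ p 0 - p 1} = {p : Plane | c < p 0 - p 1} := by
  change interior ((fdiff.comp (PiLp.continuousLinearEquiv 2 ℝ (fun _ : Fin 2 => ℝ) : Plane →L[ℝ] (Fin 2 → ℝ))) ⁻¹' Set.Ici c) = (fdiff.comp (PiLp.continuousLinearEquiv 2 ℝ (fun _ : Fin 2 => ℝ) : Plane →L[ℝ] (Fin 2 → ℝ))) ⁻¹' Set.Ioi c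
  rw [(fdiff.comp (PiLp.continuousLinearEquiv 2 ℝ (fun _ : Fin 2 => ℝ) : Plane →L[ℝ] (Fin 2 → ℝ))).interior_preimage (fdiff_surj.comp (PiLp.continuousLinearEquiv 2 ℝ (fun _ : Fin 2 => ℝ)).surjective), interior_Ici]

/-! #### Separation lemmas for interiors of convex hulls -/

lemma sepX (c : ℝ) {V W : Set Plane} (hV : ∀ p ∈ V, p 0 ≤ c) (hW : ∀ p ∈ W, c ≤ p 0) :
    Disjoint (interior (convexHull ℝ V)) (interior (convexHull ℝ W)) := by
  have h1 : convexHull ℝ V ⊆ {p : Plane | p 0 ≤ c} :=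
    convexHull_min hV (convex_halfSpace_le (isLinearMap_coord 0) c)
  have h2 : convexHull ℝ W ⊆ {p : Plane | c ≤ p 0} :=
    convexHull_min hW (convex_halfSpace_ge (isLinearMap_coord 0) c)
  refine Set.disjoint_left.2 fun x hx hx' => ?_
  have k1 := interior_mono h1 hx
  have k2 := interior_mono h2 hx'
  rw [interior_coord_le] at k1
  rw [interior_coord_ge] at k2
  simp only [Set.mem_setOf_eq] at k1 k2
  linarith

lemma sepY (c : ℝ) {V W : Set Plane} (hV : ∀ p ∈ V, p 1 ≤ c) (hW : ∀ p ∈ W, c ≤ p 1) :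
    Disjoint (interior (convexHull ℝ V)) (interior (convexHull ℝ W)) := by
  have h1 : convexHull ℝ V ⊆ {p : Plane | p 1 ≤ c} :=
    convexHull_min hV (convex_halfSpace_le (isLinearMap_coord 1) c)
  have h2 : convexHull ℝ W ⊆ {p : Plane | c ≤ p 1} :=
    convexHull_min hW (convex_halfSpace_ge (isLinearMap_coord 1) c)
  refine Set.disjoint_left.2 fun x hx hx' => ?_
  have k1 := interior_mono h1 hx
  have k2 := interior_mono h2 hx'
  rw [interior_coord_le] at k1
  rw [interior_coord_ge] at k2
  simp only [Set.mem_setOf_eq] at k1 k2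
  linarith

lemma sepS (c : ℝ) {V W : Set Plane} (hV : ∀ p ∈ V, p 0 + p 1 ≤ c)
    (hW : ∀ p ∈ W, c ≤ p 0 + p 1) :
    Disjoint (interior (convexHull ℝ V)) (interior (convexHull ℝ W)) := by
  have h1 : convexHull ℝ V ⊆ {p : Plane | p 0 + p 1 ≤ c} :=
    convexHull_min hV (convex_halfSpace_le isLinearMap_sum c)
  have h2 : convexHull ℝ W ⊆ {p : Plane | c ≤ p 0 + p 1} :=
    convexHull_min hW (convex_halfSpace_ge isLinearMap_sum c)
  refine Set.disjoint_left.2 fun x hx hx' => ?_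
  have k1 := interior_mono h1 hx
  have k2 := interior_mono h2 hx'
  rw [interior_sum_le] at k1
  rw [interior_sum_ge] at k2
  simp only [Set.mem_setOf_eq] at k1 k2
  linarith

lemma sepD (c : ℝ) {V W : Set Plane} (hV : ∀ p ∈ V, p 0 - p 1 ≤ c)
    (hW : ∀ p ∈ W, c ≤ p 0 - p 1) :
    Disjoint (interior (convexHull ℝ V)) (interior (convexHull ℝ W)) := by
  have h1 : convexHull ℝ V ⊆ {p : Plane | p 0 - p 1 ≤ c} :=
    convexHull_min hV (convex_halfSpace_le isLinearMap_diff c)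
  have h2 : convexHull ℝ W ⊆ {p : Plane | c ≤ p 0 - p 1} :=
    convexHull_min hW (convex_halfSpace_ge isLinearMap_diff c)
  refine Set.disjoint_left.2 fun x hx hx' => ?_
  have k1 := interior_mono h1 hx
  have k2 := interior_mono h2 hx'
  rw [interior_diff_le] at k1
  rw [interior_diff_ge] at k2
  simp only [Set.mem_setOf_eq] at k1 k2
  linarith

/-! #### Membership in convex hulls via explicit convex combinations -/

lemma mem_tri {α β γ : ℝ} (p q r x : Plane) (hα : 0 ≤ α) (hβ : 0 ≤ β) (hγ : 0 ≤ γ)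
    (hsum : α + β + γ = 1) (hx : x = α • p + β • q + γ • r) :
    x ∈ convexHull ℝ ({p, q, r} : Set Plane) := by
  have h := Finset.centerMass_mem_convexHull (t := (Finset.univ : Finset (Fin 3)))
    (w := ![α, β, γ]) (z := ![p, q, r]) (s := ({p, q, r} : Set Plane))
    (by intro i _; fin_cases i <;> simpa) (by simp [Fin.sum_univ_three, hsum])
    (by intro i _; fin_cases i <;> simp)
  rwa [Finset.centerMass, show ∑ i, ![α, β, γ] i = 1 by simp [Fin.sum_univ_three, hsum],
    inv_one, one_smul, Fin.sum_univ_three, show (![α, β, γ] 0 • ![p, q, r] 0 +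
      ![α, β, γ] 1 • ![p, q, r] 1 + ![α, β, γ] 2 • ![p, q, r] 2 : Plane)
      = α • p + β • q + γ • r by rfl, ← hx] at h

lemma mem_quad {α β γ δ : ℝ} (p q r s x : Plane) (hα : 0 ≤ α) (hβ : 0 ≤ β) (hγ : 0 ≤ γ)
    (hδ : 0 ≤ δ) (hsum : α + β + γ + δ = 1) (hx : x = α • p + β • q + γ • r + δ • s) :
    x ∈ convexHull ℝ ({p, q, r, s} : Set Plane) := by
  have h := Finset.centerMass_mem_convexHull (t := (Finset.univ : Finset (Fin 4)))
    (w := ![α, β, γ, δ]) (z := ![p, q, r, s]) (s := ({p, q, r, s} : Set Plane))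
    (by intro i _; fin_cases i <;> simpa) (by simp [Fin.sum_univ_four, hsum])
    (by intro i _; fin_cases i <;> simp)
  rwa [Finset.centerMass, show ∑ i, ![α, β, γ, δ] i = 1 by simp [Fin.sum_univ_four, hsum],
    inv_one, one_smul, Fin.sum_univ_four, show (![α, β, γ, δ] 0 • ![p, q, r, s] 0 +
      ![α, β, γ, δ] 1 • ![p, q, r, s] 1 + ![α, β, γ, δ] 2 • ![p, q, r, s] 2 +
      ![α, β, γ, δ] 3 • ![p, q, r, s] 3 : Plane)
      = α • p + β • q + γ • r + δ • s by rfl, ← hx] at h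

/-! #### The isometries -/

def lmapFun (e f g h : ℝ) : Plane → Plane := fun p => pt (e * p 0 + f * p 1) (g * p 0 + h * p 1)

@[simp] lemma lmapFun_apply0 (e f g h : ℝ) (p : Plane) :
    lmapFun e f g h p 0 = e * p 0 + f * p 1 := rfl
@[simp] lemma lmapFun_apply1 (e f g h : ℝ) (p : Plane) :
    lmapFun e f g h p 1 = g * p 0 + h * p 1 := rfl

def mkIso (e f g h : ℝ) (h1 : e*e + g*g = 1) (h2 : f*f + h*h = 1) (h3 : e*f + g*h = 0)
    (h1' : e*e + f*f = 1) (h2' : g*g + h*h = 1) (h3' : e*g + f*h = 0) :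
    Plane ≃ₗᵢ[ℝ] Plane where
  toFun := lmapFun e f g h
  invFun := lmapFun e g f h
  map_add' p q := by
    apply plane_ext <;> simp only [lmapFun_apply0, lmapFun_apply1, plane_add_apply] <;> ring
  map_smul' c p := by
    apply plane_ext <;>
      simp only [lmapFun_apply0, lmapFun_apply1, plane_smul_apply, smul_eq_mul,
        RingHom.id_apply] <;> ring
  left_inv p := by
    apply plane_ext <;> simp only [lmapFun_apply0, lmapFun_apply1]
    · linear_combination (p 0) * h1 + (p 1) * h3
    · linear_combination (p 0) * h3 + (p 1) * h2
  right_inv p := by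
    apply plane_ext <;> simp only [lmapFun_apply0, lmapFun_apply1]
    · linear_combination (p 0) * h1' + (p 1) * h3'
    · linear_combination (p 0) * h3' + (p 1) * h2'
  norm_map' p := by
    have key : ∀ q : Plane, ‖q‖ = Real.sqrt (q 0 ^ 2 + q 1 ^ 2) := by
      intro q
      rw [EuclideanSpace.norm_eq]
      simp [Fin.sum_univ_two, sq_abs]
    show ‖lmapFun e f g h p‖ = ‖p‖
    rw [key, key]
    congr 1
    simp only [lmapFun_apply0, lmapFun_apply1]
    linear_combination (p 0 ^ 2) * h1 + (p 1 ^ 2) * h2 + (2 * p 0 * p 1) * h3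

@[simp] lemma mkIso_apply (e f g h : ℝ) (h1 h2 h3 h1' h2' h3') (p : Plane) :
    mkIso e f g h h1 h2 h3 h1' h2' h3' p = lmapFun e f g h p := rfl

lemma sqrt2_sq : Real.sqrt 2 * Real.sqrt 2 = 2 := Real.mul_self_sqrt (by norm_num)

def idM : Plane ≃ₗᵢ[ℝ] Plane :=
  mkIso 1 0 0 1 (by norm_num) (by norm_num) (by norm_num) (by norm_num) (by norm_num)
    (by norm_num)
def negYM : Plane ≃ₗᵢ[ℝ] Plane :=
  mkIso 1 0 0 (-1) (by norm_num) (by norm_num) (by norm_num) (by norm_num) (by norm_num)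
    (by norm_num)
def negXM : Plane ≃ₗᵢ[ℝ] Plane :=
  mkIso (-1) 0 0 1 (by norm_num) (by norm_num) (by norm_num) (by norm_num) (by norm_num)
    (by norm_num)
def rotM : Plane ≃ₗᵢ[ℝ] Plane :=
  mkIso (Real.sqrt 2 / 2) (Real.sqrt 2 / 2) (-(Real.sqrt 2 / 2)) (Real.sqrt 2 / 2)
    (by linear_combination sqrt2_sq / 2) (by linear_combination sqrt2_sq / 2)
    (by ring) (by linear_combination sqrt2_sq / 2) (by linear_combination sqrt2_sq / 2)
    (by ring)

/-- An affine isometry: linear part followed by a translation. -/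
def tr (lin : Plane ≃ₗᵢ[ℝ] Plane) (v : Plane) : Plane ≃ᵃⁱ[ℝ] Plane :=
  lin.toAffineIsometryEquiv.trans (AffineIsometryEquiv.constVAdd ℝ Plane v)

lemma tr_apply (lin : Plane ≃ₗᵢ[ℝ] Plane) (v p : Plane) : (tr lin v) p = v + lin p := by
  simp [tr, AffineIsometryEquiv.constVAdd]; rfl

/-- The seven placements. -/
def gA : Fin 7 → (Plane ≃ᵃⁱ[ℝ] Plane) :=
  ![tr negYM (pt 1 2), tr idM (pt 0 0), tr rotM (pt 1 1), tr idM (pt 2 0),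
    tr idM (pt 0 2), tr idM (pt 0 1), tr negXM (pt 2 0)]

/-- The placed pieces. -/
def H : Fin 7 → Set Plane :=
  ![convexHull ℝ {pt 1 2, pt 2 2, pt 1 1},
    convexHull ℝ {pt 0 0, pt 1 0, pt 0 1},
    convexHull ℝ {pt 1 1, pt 2 0, pt 2 2},
    convexHull ℝ {pt 2 0, pt 4 0, pt 2 2},
    convexHull ℝ {pt 0 2, pt 2 2, pt 0 4},
    convexHull ℝ {pt 0 1, pt 1 1, pt 1 2, pt 0 2},
    convexHull ℝ {pt 2 0, pt 1 0, pt 0 1, pt 1 1}]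

lemma img_hull (e : Plane ≃ᵃⁱ[ℝ] Plane) (s : Set Plane) :
    ⇑e.toIsometryEquiv '' (convexHull ℝ s) = convexHull ℝ (⇑e '' s) := by
  have h2 : ⇑e.toIsometryEquiv = ⇑e.toAffineEquiv.toAffineMap := rfl
  rw [h2, AffineMap.image_convexHull]
  congr 1

lemma himg0 : ⇑(gA 0).toIsometryEquiv '' tanPiece 0 = H 0 := by
  rw [show tanPiece 0 = convexHull ℝ {pt 0 0, pt 1 0, pt 0 1} from rfl, img_hull]
  rw [Set.image_insert_eq, Set.image_insert_eq, Set.image_singleton]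
  have e1 : gA 0 (pt 0 0) = pt 1 2 := by
    show tr negYM (pt 1 2) (pt 0 0) = _
    rw [tr_apply]; apply plane_ext <;> simp [negYM] <;> norm_num [Real.sq_sqrt]
  have e2 : gA 0 (pt 1 0) = pt 2 2 := by
    show tr negYM (pt 1 2) (pt 1 0) = _
    rw [tr_apply]; apply plane_ext <;> simp [negYM] <;> norm_num [Real.sq_sqrt]
  have e3 : gA 0 (pt 0 1) = pt 1 1 := by
    show tr negYM (pt 1 2) (pt 0 1) = _
    rw [tr_apply]; apply plane_ext <;> simp [negYM] <;> norm_num [Real.sq_sqrt]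
  rw [e1, e2, e3]; rfl

lemma himg1 : ⇑(gA 1).toIsometryEquiv '' tanPiece 1 = H 1 := by
  rw [show tanPiece 1 = convexHull ℝ {pt 0 0, pt 1 0, pt 0 1} from rfl, img_hull]
  rw [Set.image_insert_eq, Set.image_insert_eq, Set.image_singleton]
  have e1 : gA 1 (pt 0 0) = pt 0 0 := by
    show tr idM (pt 0 0) (pt 0 0) = _
    rw [tr_apply]; apply plane_ext <;> simp [idM] <;> norm_num [Real.sq_sqrt]
  have e2 : gA 1 (pt 1 0) = pt 1 0 := by
    show tr idM (pt 0 0) (pt 1 0) = _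
    rw [tr_apply]; apply plane_ext <;> simp [idM] <;> norm_num [Real.sq_sqrt]
  have e3 : gA 1 (pt 0 1) = pt 0 1 := by
    show tr idM (pt 0 0) (pt 0 1) = _
    rw [tr_apply]; apply plane_ext <;> simp [idM] <;> norm_num [Real.sq_sqrt]
  rw [e1, e2, e3]; rfl

lemma himg2 : ⇑(gA 2).toIsometryEquiv '' tanPiece 2 = H 2 := by
  rw [show tanPiece 2 = convexHull ℝ {pt 0 0, pt (Real.sqrt 2) 0, pt 0 (Real.sqrt 2)}
    from rfl, img_hull]
  rw [Set.image_insert_eq, Set.image_insert_eq, Set.image_singleton]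
  have e1 : gA 2 (pt 0 0) = pt 1 1 := by
    show tr rotM (pt 1 1) (pt 0 0) = _
    rw [tr_apply]; apply plane_ext <;> simp [rotM] <;> norm_num [Real.sq_sqrt]
  have e2 : gA 2 (pt (Real.sqrt 2) 0) = pt 2 0 := by
    show tr rotM (pt 1 1) (pt (Real.sqrt 2) 0) = _
    rw [tr_apply]; apply plane_ext <;> simp [rotM] <;>
      first
        | linear_combination sqrt2_sq / 2
        | linear_combination -sqrt2_sq / 2
  have e3 : gA 2 (pt 0 (Real.sqrt 2)) = pt 2 2 := by
    show tr rotM (pt 1 1) (pt 0 (Real.sqrt 2)) = _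
    rw [tr_apply]; apply plane_ext <;> simp [rotM] <;>
      first
        | linear_combination sqrt2_sq / 2
        | linear_combination -sqrt2_sq / 2
  rw [e1, e2, e3]; rfl

lemma himg3 : ⇑(gA 3).toIsometryEquiv '' tanPiece 3 = H 3 := by
  rw [show tanPiece 3 = convexHull ℝ {pt 0 0, pt 2 0, pt 0 2} from rfl, img_hull]
  rw [Set.image_insert_eq, Set.image_insert_eq, Set.image_singleton]
  have e1 : gA 3 (pt 0 0) = pt 2 0 := by
    show tr idM (pt 2 0) (pt 0 0) = _
    rw [tr_apply]; apply plane_ext <;> simp [idM] <;> norm_num [Real.sq_sqrt]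
  have e2 : gA 3 (pt 2 0) = pt 4 0 := by
    show tr idM (pt 2 0) (pt 2 0) = _
    rw [tr_apply]; apply plane_ext <;> simp [idM] <;> norm_num [Real.sq_sqrt]
  have e3 : gA 3 (pt 0 2) = pt 2 2 := by
    show tr idM (pt 2 0) (pt 0 2) = _
    rw [tr_apply]; apply plane_ext <;> simp [idM] <;> norm_num [Real.sq_sqrt]
  rw [e1, e2, e3]; rfl

lemma himg4 : ⇑(gA 4).toIsometryEquiv '' tanPiece 4 = H 4 := by
  rw [show tanPiece 4 = convexHull ℝ {pt 0 0, pt 2 0, pt 0 2} from rfl, img_hull]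
  rw [Set.image_insert_eq, Set.image_insert_eq, Set.image_singleton]
  have e1 : gA 4 (pt 0 0) = pt 0 2 := by
    show tr idM (pt 0 2) (pt 0 0) = _
    rw [tr_apply]; apply plane_ext <;> simp [idM] <;> norm_num [Real.sq_sqrt]
  have e2 : gA 4 (pt 2 0) = pt 2 2 := by
    show tr idM (pt 0 2) (pt 2 0) = _
    rw [tr_apply]; apply plane_ext <;> simp [idM] <;> norm_num [Real.sq_sqrt]
  have e3 : gA 4 (pt 0 2) = pt 0 4 := by
    show tr idM (pt 0 2) (pt 0 2) = _
    rw [tr_apply]; apply plane_ext <;> simp [idM] <;> norm_num [Real.sq_sqrt]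
  rw [e1, e2, e3]; rfl

lemma himg5 : ⇑(gA 5).toIsometryEquiv '' tanPiece 5 = H 5 := by
  rw [show tanPiece 5 = convexHull ℝ {pt 0 0, pt 1 0, pt 1 1, pt 0 1} from rfl, img_hull]
  rw [Set.image_insert_eq, Set.image_insert_eq, Set.image_insert_eq, Set.image_singleton]
  have e1 : gA 5 (pt 0 0) = pt 0 1 := by
    show tr idM (pt 0 1) (pt 0 0) = _
    rw [tr_apply]; apply plane_ext <;> simp [idM] <;> norm_num [Real.sq_sqrt]
  have e2 : gA 5 (pt 1 0) = pt 1 1 := by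
    show tr idM (pt 0 1) (pt 1 0) = _
    rw [tr_apply]; apply plane_ext <;> simp [idM] <;> norm_num [Real.sq_sqrt]
  have e3 : gA 5 (pt 1 1) = pt 1 2 := by
    show tr idM (pt 0 1) (pt 1 1) = _
    rw [tr_apply]; apply plane_ext <;> simp [idM] <;> norm_num [Real.sq_sqrt]
  have e4 : gA 5 (pt 0 1) = pt 0 2 := by
    show tr idM (pt 0 1) (pt 0 1) = _
    rw [tr_apply]; apply plane_ext <;> simp [idM] <;> norm_num [Real.sq_sqrt]
  rw [e1, e2, e3, e4]; rfl

lemma himg6 : ⇑(gA 6).toIsometryEquiv '' tanPiece 6 = H 6 := by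
  rw [show tanPiece 6 = convexHull ℝ {pt 0 0, pt 1 0, pt 2 1, pt 1 1} from rfl, img_hull]
  rw [Set.image_insert_eq, Set.image_insert_eq, Set.image_insert_eq, Set.image_singleton]
  have e1 : gA 6 (pt 0 0) = pt 2 0 := by
    show tr negXM (pt 2 0) (pt 0 0) = _
    rw [tr_apply]; apply plane_ext <;> simp [negXM] <;> norm_num [Real.sq_sqrt]
  have e2 : gA 6 (pt 1 0) = pt 1 0 := by
    show tr negXM (pt 2 0) (pt 1 0) = _
    rw [tr_apply]; apply plane_ext <;> simp [negXM] <;> norm_num [Real.sq_sqrt]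
  have e3 : gA 6 (pt 2 1) = pt 0 1 := by
    show tr negXM (pt 2 0) (pt 2 1) = _
    rw [tr_apply]; apply plane_ext <;> simp [negXM] <;> norm_num [Real.sq_sqrt]
  have e4 : gA 6 (pt 1 1) = pt 1 1 := by
    show tr negXM (pt 2 0) (pt 1 1) = _
    rw [tr_apply]; apply plane_ext <;> simp [negXM] <;> norm_num [Real.sq_sqrt]
  rw [e1, e2, e3, e4]; rfl

lemma himg : ∀ i : Fin 7, ⇑(gA i).toIsometryEquiv '' tanPiece i = H i := by
  intro i; fin_cases i
  exacts [himg0, himg1, himg2, himg3, himg4, himg5, himg6]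

/-! #### Membership lemmas for the placed pieces -/

lemma memT {x : Plane} (h1 : 0 ≤ x 0) (h2 : 0 ≤ x 1) (h3 : x 0 + x 1 ≤ 4) :
    x ∈ convexHull ℝ ({pt 0 0, pt 4 0, pt 0 4} : Set Plane) := by
  refine mem_tri _ _ _ x (α := (4 - x 0 - x 1)/4) (β := x 0 / 4) (γ := x 1 / 4)
    (by linarith) (by linarith) (by linarith) (by ring) ?_
  apply plane_ext <;> simp <;> ring

lemma memH0 {x : Plane} (h1 : 1 ≤ x 0) (h2 : x 0 ≤ x 1) (h3 : x 1 ≤ 2) :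
    x ∈ convexHull ℝ ({pt 1 2, pt 2 2, pt 1 1} : Set Plane) := by
  refine mem_tri _ _ _ x (α := x 1 - x 0) (β := x 0 - 1) (γ := 2 - x 1)
    (by linarith) (by linarith) (by linarith) (by ring) ?_
  apply plane_ext <;> simp <;> ring

lemma memH1 {x : Plane} (h1 : 0 ≤ x 0) (h2 : 0 ≤ x 1) (h3 : x 0 + x 1 ≤ 1) :
    x ∈ convexHull ℝ ({pt 0 0, pt 1 0, pt 0 1} : Set Plane) := by
  refine mem_tri _ _ _ x (α := 1 - x 0 - x 1) (β := x 0) (γ := x 1)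
    (by linarith) (by linarith) (by linarith) (by ring) ?_
  apply plane_ext <;> simp <;> ring

lemma memH2 {x : Plane} (h1 : x 1 ≤ x 0) (h2 : 2 ≤ x 0 + x 1) (h3 : x 0 ≤ 2) :
    x ∈ convexHull ℝ ({pt 1 1, pt 2 0, pt 2 2} : Set Plane) := by
  refine mem_tri _ _ _ x (α := 2 - x 0) (β := (x 0 - x 1)/2) (γ := (x 0 + x 1 - 2)/2)
    (by linarith) (by linarith) (by linarith) (by ring) ?_
  apply plane_ext <;> simp <;> ring

lemma memH3 {x : Plane} (h1 : 2 ≤ x 0) (h2 : 0 ≤ x 1) (h3 : x 0 + x 1 ≤ 4) :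
    x ∈ convexHull ℝ ({pt 2 0, pt 4 0, pt 2 2} : Set Plane) := by
  refine mem_tri _ _ _ x (α := (4 - x 0 - x 1)/2) (β := (x 0 - 2)/2) (γ := x 1 / 2)
    (by linarith) (by linarith) (by linarith) (by ring) ?_
  apply plane_ext <;> simp <;> ring

lemma memH4 {x : Plane} (h1 : 2 ≤ x 1) (h2 : 0 ≤ x 0) (h3 : x 0 + x 1 ≤ 4) :
    x ∈ convexHull ℝ ({pt 0 2, pt 2 2, pt 0 4} : Set Plane) := by
  refine mem_tri _ _ _ x (α := (4 - x 0 - x 1)/2) (β := x 0 / 2) (γ := (x 1 - 2)/2)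
    (by linarith) (by linarith) (by linarith) (by ring) ?_
  apply plane_ext <;> simp <;> ring

lemma memH5 {x : Plane} (h1 : 0 ≤ x 0) (h2 : x 0 ≤ 1) (h3 : 1 ≤ x 1) (h4 : x 1 ≤ 2) :
    x ∈ convexHull ℝ ({pt 0 1, pt 1 1, pt 1 2, pt 0 2} : Set Plane) := by
  refine mem_quad _ _ _ _ x (α := (1 - x 0) * (2 - x 1)) (β := x 0 * (2 - x 1))
    (γ := x 0 * (x 1 - 1)) (δ := (1 - x 0) * (x 1 - 1))
    (mul_nonneg (by linarith) (by linarith)) (mul_nonneg (by linarith) (by linarith))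
    (mul_nonneg (by linarith) (by linarith)) (mul_nonneg (by linarith) (by linarith))
    (by ring) ?_
  apply plane_ext <;> simp <;> ring

lemma memH6 {x : Plane} (h1 : 0 ≤ x 1) (h2 : x 1 ≤ 1) (h3 : 1 ≤ x 0 + x 1)
    (h4 : x 0 + x 1 ≤ 2) :
    x ∈ convexHull ℝ ({pt 2 0, pt 1 0, pt 0 1, pt 1 1} : Set Plane) := by
  refine mem_quad _ _ _ _ x (α := (x 0 + x 1 - 1) * (1 - x 1))
    (β := (2 - x 0 - x 1) * (1 - x 1)) (γ := (2 - x 0 - x 1) * x 1)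
    (δ := (x 0 + x 1 - 1) * x 1)
    (mul_nonneg (by linarith) (by linarith)) (mul_nonneg (by linarith) (by linarith))
    (mul_nonneg (by linarith) (by linarith)) (mul_nonneg (by linarith) (by linarith))
    (by ring) ?_
  apply plane_ext <;> simp <;> ring

/-! #### The main theorem -/

/-- The isosceles right triangle with legs of length 4 is a tangram. -/
theorem triangle_is_tangram :
    IsTangram (convexHull ℝ {pt 0 0, pt 4 0, pt 0 4}) := by
  refine ⟨fun i => (gA i).toIsometryEquiv, ?_, ?_⟩
  · rw [show (⋃ i, ⇑(gA i).toIsometryEquiv '' tanPiece i) = ⋃ i, H i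
      from Set.iUnion_congr himg]
    apply Set.Subset.antisymm
    · intro x hx
      have ha : 0 ≤ x 0 := by
        have : convexHull ℝ ({pt 0 0, pt 4 0, pt 0 4} : Set Plane)
            ⊆ {p : Plane | 0 ≤ p 0} := by
          refine convexHull_min ?_ (convex_halfSpace_ge (isLinearMap_coord 0) 0)
          rintro p (rfl | rfl | rfl) <;> norm_num
        exact this hx
      have hb : 0 ≤ x 1 := by
        have : convexHull ℝ ({pt 0 0, pt 4 0, pt 0 4} : Set Plane)
            ⊆ {p : Plane | 0 ≤ p 1} := by
          refine convexHull_min ?_ (convex_halfSpace_ge (isLinearMap_coord 1) 0)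
          rintro p (rfl | rfl | rfl) <;> norm_num
        exact this hx
      have hab : x 0 + x 1 ≤ 4 := by
        have : convexHull ℝ ({pt 0 0, pt 4 0, pt 0 4} : Set Plane)
            ⊆ {p : Plane | p 0 + p 1 ≤ 4} := by
          refine convexHull_min ?_ (convex_halfSpace_le isLinearMap_sum 4)
          rintro p (rfl | rfl | rfl) <;> norm_num
        exact this hx
      rw [Set.mem_iUnion]
      by_cases h3 : 2 ≤ x 0
      · exact ⟨3, memH3 h3 hb hab⟩
      push_neg at h3
      by_cases h4 : 2 ≤ x 1
      · exact ⟨4, memH4 h4 ha hab⟩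
      push_neg at h4
      by_cases hs1 : x 0 + x 1 ≤ 1
      · exact ⟨1, memH1 ha hb hs1⟩
      push_neg at hs1
      by_cases hb1 : x 1 ≤ 1
      · by_cases hs2 : x 0 + x 1 ≤ 2
        · exact ⟨6, memH6 hb hb1 hs1.le hs2⟩
        · push_neg at hs2
          exact ⟨2, memH2 (by linarith) (by linarith) (by linarith)⟩
      push_neg at hb1
      by_cases ha1 : x 0 ≤ 1
      · exact ⟨5, memH5 ha ha1 hb1.le h4.le⟩
      push_neg at ha1
      by_cases hba : x 0 ≤ x 1
      · exact ⟨0, memH0 ha1.le hba h4.le⟩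
      · push_neg at hba
        exact ⟨2, memH2 hba.le (by linarith) (by linarith)⟩
    · refine Set.iUnion_subset fun i => ?_
      fin_cases i <;>
        exact convexHull_min
          (by rintro p (rfl | rfl | rfl | rfl) <;> apply memT <;> norm_num)
          (convex_convexHull ℝ _)
  · have d01 : Disjoint (interior (H 0)) (interior (H 1)) :=
      (sepS 2 (by rintro p (rfl | rfl | rfl) <;> norm_num)
        (by rintro p (rfl | rfl | rfl) <;> norm_num)).symm
    have d02 : Disjoint (interior (H 0)) (interior (H 2)) :=
      sepD 0 (by rintro p (rfl | rfl | rfl) <;> norm_num)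
        (by rintro p (rfl | rfl | rfl) <;> norm_num)
    have d03 : Disjoint (interior (H 0)) (interior (H 3)) :=
      sepX 2 (by rintro p (rfl | rfl | rfl) <;> norm_num)
        (by rintro p (rfl | rfl | rfl) <;> norm_num)
    have d04 : Disjoint (interior (H 0)) (interior (H 4)) :=
      sepY 2 (by rintro p (rfl | rfl | rfl) <;> norm_num)
        (by rintro p (rfl | rfl | rfl) <;> norm_num)
    have d05 : Disjoint (interior (H 0)) (interior (H 5)) :=
      (sepX 1 (by rintro p (rfl | rfl | rfl | rfl) <;> norm_num)
        (by rintro p (rfl | rfl | rfl) <;> norm_num)).symm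
    have d06 : Disjoint (interior (H 0)) (interior (H 6)) :=
      (sepY 1 (by rintro p (rfl | rfl | rfl | rfl) <;> norm_num)
        (by rintro p (rfl | rfl | rfl) <;> norm_num)).symm
    have d12 : Disjoint (interior (H 1)) (interior (H 2)) :=
      sepS 2 (by rintro p (rfl | rfl | rfl) <;> norm_num)
        (by rintro p (rfl | rfl | rfl) <;> norm_num)
    have d13 : Disjoint (interior (H 1)) (interior (H 3)) :=
      sepX 2 (by rintro p (rfl | rfl | rfl) <;> norm_num)
        (by rintro p (rfl | rfl | rfl) <;> norm_num)
    have d14 : Disjoint (interior (H 1)) (interior (H 4)) :=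
      sepY 2 (by rintro p (rfl | rfl | rfl) <;> norm_num)
        (by rintro p (rfl | rfl | rfl) <;> norm_num)
    have d15 : Disjoint (interior (H 1)) (interior (H 5)) :=
      sepY 1 (by rintro p (rfl | rfl | rfl) <;> norm_num)
        (by rintro p (rfl | rfl | rfl | rfl) <;> norm_num)
    have d16 : Disjoint (interior (H 1)) (interior (H 6)) :=
      sepS 1 (by rintro p (rfl | rfl | rfl) <;> norm_num)
        (by rintro p (rfl | rfl | rfl | rfl) <;> norm_num)
    have d23 : Disjoint (interior (H 2)) (interior (H 3)) :=
      sepX 2 (by rintro p (rfl | rfl | rfl) <;> norm_num)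
        (by rintro p (rfl | rfl | rfl) <;> norm_num)
    have d24 : Disjoint (interior (H 2)) (interior (H 4)) :=
      sepY 2 (by rintro p (rfl | rfl | rfl) <;> norm_num)
        (by rintro p (rfl | rfl | rfl) <;> norm_num)
    have d25 : Disjoint (interior (H 2)) (interior (H 5)) :=
      (sepX 1 (by rintro p (rfl | rfl | rfl | rfl) <;> norm_num)
        (by rintro p (rfl | rfl | rfl) <;> norm_num)).symm
    have d26 : Disjoint (interior (H 2)) (interior (H 6)) :=
      (sepS 2 (by rintro p (rfl | rfl | rfl | rfl) <;> norm_num)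
        (by rintro p (rfl | rfl | rfl) <;> norm_num)).symm
    have d34 : Disjoint (interior (H 3)) (interior (H 4)) :=
      (sepX 2 (by rintro p (rfl | rfl | rfl) <;> norm_num)
        (by rintro p (rfl | rfl | rfl) <;> norm_num)).symm
    have d35 : Disjoint (interior (H 3)) (interior (H 5)) :=
      (sepX 1 (by rintro p (rfl | rfl | rfl | rfl) <;> norm_num)
        (by rintro p (rfl | rfl | rfl) <;> norm_num)).symm
    have d36 : Disjoint (interior (H 3)) (interior (H 6)) :=
      (sepX 2 (by rintro p (rfl | rfl | rfl | rfl) <;> norm_num)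
        (by rintro p (rfl | rfl | rfl) <;> norm_num)).symm
    have d45 : Disjoint (interior (H 4)) (interior (H 5)) :=
      (sepY 2 (by rintro p (rfl | rfl | rfl | rfl) <;> norm_num)
        (by rintro p (rfl | rfl | rfl) <;> norm_num)).symm
    have d46 : Disjoint (interior (H 4)) (interior (H 6)) :=
      (sepY 2 (by rintro p (rfl | rfl | rfl | rfl) <;> norm_num)
        (by rintro p (rfl | rfl | rfl) <;> norm_num)).symm
    have d56 : Disjoint (interior (H 5)) (interior (H 6)) :=
      (sepY 1 (by rintro p (rfl | rfl | rfl | rfl) <;> norm_num)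
        (by rintro p (rfl | rfl | rfl | rfl) <;> norm_num)).symm
    intro i j hij
    rw [himg i, himg j]
    fin_cases i <;> fin_cases j
    exacts [absurd rfl hij, d01, d02, d03, d04, d05, d06,
      d01.symm, absurd rfl hij, d12, d13, d14, d15, d16,
      d02.symm, d12.symm, absurd rfl hij, d23, d24, d25, d26,
      d03.symm, d13.symm, d23.symm, absurd rfl hij, d34, d35, d36,
      d04.symm, d14.symm, d24.symm, d34.symm, absurd rfl hij, d45, d46,
      d05.symm, d15.symm, d25.symm, d35.symm, d45.symm, absurd rfl hij, d56,
      d06.symm, d16.symm, d26.symm, d36.symm, d46.symm, d56.symm, absurd rfl hij]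
end
end

section
/- The convex pentagon with vertices (0,0),(4,0),(4,1),(2,3),(0,1), i.e. the convex hull of {(0,0),(4,0),(4,1),(2,3),(0,1)} in ℝ², is a tangram. -/
noncomputable section

namespace TangramAux

@[simp] lemma pt_apply0 (x y : ℝ) : pt x y 0 = x := rfl
@[simp] lemma pt_apply1 (x y : ℝ) : pt x y 1 = y := rfl
lemma pt_eta (p : Plane) : pt (p 0) (p 1) = p := by ext i; fin_cases i <;> rfl
lemma pt_add (a b c d : ℝ) : pt a b + pt c d = pt (a+c) (b+d) := by
  ext i; fin_cases i <;> rfl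
lemma pt_smul (r a b : ℝ) : r • pt a b = pt (r*a) (r*b) := by
  ext i; fin_cases i <;> rfl
lemma pt_congr {x y x' y' : ℝ} (hx : x = x') (hy : y = y') : pt x y = pt x' y' := by
  rw [hx, hy]
lemma norm_plane (q : Plane) : ‖q‖ = Real.sqrt ((q 0)^2 + (q 1)^2) := by
  rw [EuclideanSpace.norm_eq]; simp [Fin.sum_univ_two]

section rows
variable {a b c d : ℝ} (h1 : a*a+c*c = 1) (h2 : b*b+d*d = 1) (h3 : a*b+c*d = 0)
include h1 h2 h3

lemma rowA : a*a+b*b = 1 := by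
  linear_combination (a*b - c*d)*h3 + d*d*h1 + c*c*h2 - (b*b+d*d-1)*h1

lemma rowB : c*c+d*d = 1 := by linear_combination h1 + h2 - rowA h1 h2 h3

lemma rowC : a*c+b*d = 0 := by
  have d1 : (a*d-b*c)^2 = 1 := by linear_combination (b*b+d*d)*h1 + h2 - (a*b+c*d)*h3
  have sq0 : (a*c+b*d)^2 = 0 := by
    linear_combination (c*c+d*d)*(rowA h1 h2 h3) + (rowB h1 h2 h3) - d1
  exact pow_eq_zero_iff (two_ne_zero) |>.mp sq0
end rows

/-- The linear map with matrix rows (a b; c d). -/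
def fwdA (a b c d : ℝ) (p : Plane) : Plane := pt (a * p 0 + b * p 1) (c * p 0 + d * p 1)

def linA (a b c d : ℝ) (h1 : a*a+c*c = 1) (h2 : b*b+d*d = 1) (h3 : a*b+c*d = 0) :
    Plane ≃ₗᵢ[ℝ] Plane where
  toFun := fwdA a b c d
  invFun := fwdA a c b d
  map_add' p q := by
    ext i; fin_cases i <;>
      simp [fwdA, PiLp.add_apply, Fin.mk_zero, Fin.mk_one] <;> ring
  map_smul' r p := by
    ext i; fin_cases i <;>
      simp [fwdA, PiLp.smul_apply, smul_eq_mul, Fin.mk_zero, Fin.mk_one] <;> ring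
  left_inv p := by
    ext i; fin_cases i
    · simp only [fwdA, Fin.mk_zero, Fin.mk_one, pt_apply0, pt_apply1, Fin.isValue]
      linear_combination (p 0) * h1 + (p 1) * h3
    · simp only [fwdA, Fin.mk_zero, Fin.mk_one, pt_apply0, pt_apply1, Fin.isValue]
      linear_combination (p 1) * h2 + (p 0) * h3
  right_inv p := by
    ext i; fin_cases i
    · simp only [fwdA, Fin.mk_zero, Fin.mk_one, pt_apply0, pt_apply1, Fin.isValue]
      linear_combination (p 0) * rowA h1 h2 h3 + (p 1) * rowC h1 h2 h3
    · simp only [fwdA, Fin.mk_zero, Fin.mk_one, pt_apply0, pt_apply1, Fin.isValue]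
      linear_combination (p 1) * rowB h1 h2 h3 + (p 0) * rowC h1 h2 h3
  norm_map' p := by
    show ‖fwdA a b c d p‖ = ‖p‖
    rw [norm_plane, norm_plane]
    simp only [fwdA, pt_apply0, pt_apply1]
    congr 1
    linear_combination (p 0)^2 * h1 + (p 1)^2 * h2 + (2 * p 0 * p 1) * h3

lemma linA_coe (a b c d : ℝ) (h1 h2 h3) : ⇑(linA a b c d h1 h2 h3) = fwdA a b c d := rfl

/-- The affine isometry x ↦ (a x₀ + b x₁ + e, c x₀ + d x₁ + f). -/
def affA (a b c d e f : ℝ) (h1 : a*a+c*c = 1) (h2 : b*b+d*d = 1) (h3 : a*b+c*d = 0) :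
    Plane ≃ᵃⁱ[ℝ] Plane :=
  (linA a b c d h1 h2 h3).toAffineIsometryEquiv.trans
    (AffineIsometryEquiv.constVAdd ℝ Plane (pt e f))

lemma affA_apply (a b c d e f : ℝ) (h1 h2 h3) (x y : ℝ) :
    affA a b c d e f h1 h2 h3 (pt x y) = pt (a*x+b*y+e) (c*x+d*y+f) := by
  show (AffineIsometryEquiv.constVAdd ℝ Plane (pt e f))
      ((linA a b c d h1 h2 h3).toAffineIsometryEquiv (pt x y)) = _
  rw [AffineIsometryEquiv.coe_constVAdd]
  have h : (linA a b c d h1 h2 h3).toAffineIsometryEquiv (pt x y) = pt (a*x+b*y) (c*x+d*y) := by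
    rw [LinearIsometryEquiv.coe_toAffineIsometryEquiv, linA_coe]; rfl
  rw [h]
  show pt e f + pt (a*x+b*y) (c*x+d*y) = _
  rw [pt_add]; exact pt_congr (by ring) (by ring)

lemma affA_image_hull (a b c d e f : ℝ) (h1 h2 h3) (s : Set Plane) :
    (affA a b c d e f h1 h2 h3).toIsometryEquiv '' (convexHull ℝ s)
      = convexHull ℝ ((affA a b c d e f h1 h2 h3) '' s) := by
  rw [AffineIsometryEquiv.coe_toIsometryEquiv]
  exact (affA a b c d e f h1 h2 h3).toAffineEquiv.toAffineMap.image_convexHull s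

/-- Linear functional on the plane. -/
def lin (u v : ℝ) (p : Plane) : ℝ := u * p 0 + v * p 1

lemma lin_pt (u v x y : ℝ) : lin u v (pt x y) = u*x+v*y := by simp [lin]

lemma lin_combo (u v a b : ℝ) (x y : Plane) :
    lin u v (a • x + b • y) = a * lin u v x + b * lin u v y := by
  simp only [lin, PiLp.add_apply, PiLp.smul_apply, smul_eq_mul]; ring

lemma convex_hs (u v c : ℝ) : Convex ℝ {p : Plane | lin u v p ≤ c} := by
  intro x hx y hy a b ha hb hab
  simp only [Set.mem_setOf_eq] at *
  rw [lin_combo]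
  have h1 : a * lin u v x ≤ a*c := mul_le_mul_of_nonneg_left hx ha
  have h2 : b * lin u v y ≤ b*c := mul_le_mul_of_nonneg_left hy hb
  have h3 : a*c+b*c = c := by linear_combination c * hab
  linarith

lemma hull_subset_hs {S : Set Plane} (u v c : ℝ) (h : ∀ p ∈ S, lin u v p ≤ c) :
    convexHull ℝ S ⊆ {p | lin u v p ≤ c} := convexHull_min h (convex_hs u v c)

lemma interior_hs {s : Set Plane} (u v c : ℝ) (hn : 0 < u*u+v*v)
    (hsub : s ⊆ {p | lin u v p ≤ c}) : interior s ⊆ {p | lin u v p < c} := by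
  intro x hx
  rw [mem_interior_iff_mem_nhds, Metric.mem_nhds_iff] at hx
  obtain ⟨ε, hε, hball⟩ := hx
  have hnorm : ‖pt u v‖ = Real.sqrt (u*u+v*v) := by
    rw [norm_plane]; simp only [pt_apply0, pt_apply1]; congr 1; ring
  have hpos : (0:ℝ) < Real.sqrt (u*u+v*v) := Real.sqrt_pos.2 hn
  set r : ℝ := ε / (2 * Real.sqrt (u*u+v*v)) with hr
  have hrpos : 0 < r := by positivity
  have hy : x + r • pt u v ∈ s := by
    apply hball
    rw [Metric.mem_ball, dist_eq_norm, add_sub_cancel_left, norm_smul, hnorm,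
      Real.norm_eq_abs, abs_of_pos hrpos, hr]
    have he : ε / (2 * Real.sqrt (u*u+v*v)) * Real.sqrt (u*u+v*v) = ε/2 := by
      rw [div_mul_eq_mul_div, mul_comm 2 (Real.sqrt _), ← div_div, mul_div_cancel_right₀ _ hpos.ne']
    rw [he]; linarith
  have hle := hsub hy
  simp only [Set.mem_setOf_eq] at hle ⊢
  have hlin : lin u v (x + r • pt u v) = lin u v x + r * (u*u+v*v) := by
    simp only [lin, PiLp.add_apply, PiLp.smul_apply, smul_eq_mul, pt_apply0, pt_apply1]; ring
  nlinarith

lemma disj_hulls (S T : Set Plane) (u v c : ℝ) (hn : 0 < u*u+v*v)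
    (hS : ∀ p ∈ S, lin u v p ≤ c) (hT : ∀ p ∈ T, c ≤ lin u v p) :
    Disjoint (interior (convexHull ℝ S)) (interior (convexHull ℝ T)) := by
  have h1 := interior_hs u v c hn (hull_subset_hs u v c hS)
  have hn' : 0 < (-u)*(-u)+(-v)*(-v) := by nlinarith
  have h2 := interior_hs (-u) (-v) (-c) hn' (hull_subset_hs (-u) (-v) (-c) (by
    intro p hp
    have := hT p hp
    simp only [lin] at this ⊢
    linarith))
  rw [Set.disjoint_left]
  intro p hp1 hp2
  have a1 := h1 hp1
  have a2 := h2 hp2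
  simp only [lin, Set.mem_setOf_eq] at a1 a2
  linarith

lemma mem_hull3 {v0 v1 v2 : Plane} {a b c : ℝ} (ha : 0 ≤ a) (hb : 0 ≤ b) (hc : 0 ≤ c)
    (hs : a + b + c = 1) : a•v0 + b•v1 + c•v2 ∈ convexHull ℝ ({v0, v1, v2} : Set Plane) := by
  have h := Finset.centerMass_mem_convexHull (Finset.univ : Finset (Fin 3))
    (s := ({v0,v1,v2} : Set Plane)) (w := ![a,b,c]) (z := ![v0,v1,v2]) (by
      intro i _; fin_cases i <;> assumption)
    (by simp [Fin.sum_univ_three]; linarith)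
    (by intro i _; fin_cases i <;> simp [Set.mem_insert_iff])
  rw [Finset.centerMass] at h
  have hsum : a + (b + c) = 1 := by linarith
  simpa [Fin.sum_univ_three, hsum, add_assoc] using h

lemma mem_hull4 {v0 v1 v2 v3 : Plane} {a b c d : ℝ} (ha : 0 ≤ a) (hb : 0 ≤ b) (hc : 0 ≤ c)
    (hd : 0 ≤ d) (hs : a + b + c + d = 1) :
    a•v0 + b•v1 + c•v2 + d•v3 ∈ convexHull ℝ ({v0, v1, v2, v3} : Set Plane) := by
  have h := Finset.centerMass_mem_convexHull (Finset.univ : Finset (Fin 4))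
    (s := ({v0,v1,v2,v3} : Set Plane)) (w := ![a,b,c,d]) (z := ![v0,v1,v2,v3]) (by
      intro i _; fin_cases i <;> assumption)
    (by simp [Fin.sum_univ_four]; linarith)
    (by intro i _; fin_cases i <;> simp [Set.mem_insert_iff])
  rw [Finset.centerMass] at h
  have hsum : a + (b + (c + d)) = 1 := by linarith
  simpa [Fin.sum_univ_four, hsum, add_assoc] using h

lemma mem_seg {x y : Plane} {a b : ℝ} (ha : 0 ≤ a) (hb : 0 ≤ b) (hs : a + b = 1) :
    a•x + b•y ∈ segment ℝ x y := ⟨a, b, ha, hb, hs, rfl⟩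

/- Membership lemmas for the seven placed pieces. -/

lemma memH0 {p : Plane} (h1 : 1 ≤ p 0) (h2 : p 1 ≤ 1) (h3 : p 0 - 1 ≤ p 1) :
    p ∈ convexHull ℝ ({pt 1 1, pt 2 1, pt 1 0} : Set Plane) := by
  have m := mem_hull3 (v0 := pt 1 1) (v1 := pt 2 1) (v2 := pt 1 0)
    (a := p 1 - p 0 + 1) (b := p 0 - 1) (c := 1 - p 1)
    (by linarith) (by linarith) (by linarith) (by ring)
  have e : (p 1 - p 0 + 1)•pt 1 1 + (p 0 - 1)•pt 2 1 + (1 - p 1)•pt 1 0 = pt (p 0) (p 1) := by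
    rw [pt_smul, pt_smul, pt_smul, pt_add, pt_add]
    exact pt_congr (by ring) (by ring)
  rwa [e, pt_eta] at m

lemma memH1 {p : Plane} (h1 : p 0 ≤ 4) (h2 : p 1 ≤ 1) (h3 : 4 ≤ p 0 + p 1) :
    p ∈ convexHull ℝ ({pt 4 1, pt 3 1, pt 4 0} : Set Plane) := by
  have m := mem_hull3 (v0 := pt 4 1) (v1 := pt 3 1) (v2 := pt 4 0)
    (a := p 0 + p 1 - 4) (b := 4 - p 0) (c := 1 - p 1)
    (by linarith) (by linarith) (by linarith) (by ring)
  have e : (p 0 + p 1 - 4)•pt 4 1 + (4 - p 0)•pt 3 1 + (1 - p 1)•pt 4 0 = pt (p 0) (p 1) := by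
    rw [pt_smul, pt_smul, pt_smul, pt_add, pt_add]
    exact pt_congr (by ring) (by ring)
  rwa [e, pt_eta] at m

lemma memH2 {p : Plane} (h1 : 0 ≤ p 1) (h2 : p 1 ≤ p 0 - 1) (h3 : p 0 + p 1 ≤ 3) :
    p ∈ convexHull ℝ ({pt 2 1, pt 1 0, pt 3 0} : Set Plane) := by
  have m := mem_hull3 (v0 := pt 2 1) (v1 := pt 1 0) (v2 := pt 3 0)
    (a := p 1) (b := (3 - p 0 - p 1)/2) (c := (p 0 - p 1 - 1)/2)
    (by linarith) (by linarith) (by linarith) (by ring)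
  have e : (p 1)•pt 2 1 + ((3 - p 0 - p 1)/2)•pt 1 0 + ((p 0 - p 1 - 1)/2)•pt 3 0
      = pt (p 0) (p 1) := by
    rw [pt_smul, pt_smul, pt_smul, pt_add, pt_add]
    exact pt_congr (by ring) (by ring)
  rwa [e, pt_eta] at m

lemma memH3 {p : Plane} (h1 : 1 ≤ p 1) (h2 : p 1 ≤ p 0 + 1) (h3 : p 0 ≤ 2) :
    p ∈ convexHull ℝ ({pt 2 1, pt 0 1, pt 2 3} : Set Plane) := by
  have m := mem_hull3 (v0 := pt 2 1) (v1 := pt 0 1) (v2 := pt 2 3)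
    (a := (p 0 - p 1 + 1)/2) (b := 1 - p 0/2) (c := (p 1 - 1)/2)
    (by linarith) (by linarith) (by linarith) (by ring)
  have e : ((p 0 - p 1 + 1)/2)•pt 2 1 + (1 - p 0/2)•pt 0 1 + ((p 1 - 1)/2)•pt 2 3
      = pt (p 0) (p 1) := by
    rw [pt_smul, pt_smul, pt_smul, pt_add, pt_add]
    exact pt_congr (by ring) (by ring)
  rwa [e, pt_eta] at m

lemma memH4 {p : Plane} (h1 : 2 ≤ p 0) (h2 : 1 ≤ p 1) (h3 : p 0 + p 1 ≤ 5) :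
    p ∈ convexHull ℝ ({pt 2 1, pt 4 1, pt 2 3} : Set Plane) := by
  have m := mem_hull3 (v0 := pt 2 1) (v1 := pt 4 1) (v2 := pt 2 3)
    (a := (5 - p 0 - p 1)/2) (b := (p 0 - 2)/2) (c := (p 1 - 1)/2)
    (by linarith) (by linarith) (by linarith) (by ring)
  have e : ((5 - p 0 - p 1)/2)•pt 2 1 + ((p 0 - 2)/2)•pt 4 1 + ((p 1 - 1)/2)•pt 2 3
      = pt (p 0) (p 1) := by
    rw [pt_smul, pt_smul, pt_smul, pt_add, pt_add]
    exact pt_congr (by ring) (by ring)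
  rwa [e, pt_eta] at m

lemma memH5 {p : Plane} (h0 : 0 ≤ p 0) (h1 : p 0 ≤ 1) (h2 : 0 ≤ p 1) (h3 : p 1 ≤ 1) :
    p ∈ convexHull ℝ ({pt 0 0, pt 1 0, pt 1 1, pt 0 1} : Set Plane) := by
  have m := mem_hull4 (v0 := pt 0 0) (v1 := pt 1 0) (v2 := pt 1 1) (v3 := pt 0 1)
    (a := (1 - p 0)*(1 - p 1)) (b := p 0 * (1 - p 1)) (c := p 0 * p 1) (d := (1 - p 0) * p 1)
    (by nlinarith) (by nlinarith) (by nlinarith) (by nlinarith) (by ring)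
  have e : ((1 - p 0)*(1 - p 1))•pt 0 0 + (p 0 * (1 - p 1))•pt 1 0 + (p 0 * p 1)•pt 1 1
      + ((1 - p 0) * p 1)•pt 0 1 = pt (p 0) (p 1) := by
    rw [pt_smul, pt_smul, pt_smul, pt_smul, pt_add, pt_add, pt_add]
    exact pt_congr (by ring) (by ring)
  rwa [e, pt_eta] at m

lemma memH6 {p : Plane} (h0 : 0 ≤ p 1) (h1 : p 1 ≤ 1) (h2 : 3 ≤ p 0 + p 1)
    (h3 : p 0 + p 1 ≤ 4) :
    p ∈ convexHull ℝ ({pt 4 0, pt 3 0, pt 2 1, pt 3 1} : Set Plane) := by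
  have m := mem_hull4 (v0 := pt 4 0) (v1 := pt 3 0) (v2 := pt 2 1) (v3 := pt 3 1)
    (a := (p 0 + p 1 - 3)*(1 - p 1)) (b := (4 - p 0 - p 1)*(1 - p 1))
    (c := (4 - p 0 - p 1)*p 1) (d := (p 0 + p 1 - 3)*p 1)
    (by nlinarith) (by nlinarith) (by nlinarith) (by nlinarith) (by ring)
  have e : ((p 0 + p 1 - 3)*(1 - p 1))•pt 4 0 + ((4 - p 0 - p 1)*(1 - p 1))•pt 3 0
      + ((4 - p 0 - p 1)*p 1)•pt 2 1 + ((p 0 + p 1 - 3)*p 1)•pt 3 1 = pt (p 0) (p 1) := by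
    rw [pt_smul, pt_smul, pt_smul, pt_smul, pt_add, pt_add, pt_add]
    exact pt_congr (by ring) (by ring)
  rwa [e, pt_eta] at m

end TangramAux

namespace TangramAux

def s2 : ℝ := (Real.sqrt 2)⁻¹

lemma s2_mul_s2 : s2 * s2 = 1/2 := by
  rw [s2, ← mul_inv, Real.mul_self_sqrt] <;> norm_num

lemma s2_mul_sqrt : s2 * Real.sqrt 2 = 1 := by
  rw [s2]
  exact inv_mul_cancel₀ (ne_of_gt (Real.sqrt_pos.2 (by norm_num)))

lemma hg2a : (-s2)*(-s2)+(-s2)*(-s2) = 1 := by linear_combination 2 * s2_mul_s2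
lemma hg2b : s2*s2+(-s2)*(-s2) = 1 := by linear_combination 2 * s2_mul_s2
lemma hg2c : (-s2)*s2+(-s2)*(-s2) = 0 := by ring

/-- The seven placements. -/
def g : Fin 7 → (Plane ≃ᵢ Plane)
  | 0 => (affA 1 0 0 (-1) 1 1 (by norm_num) (by norm_num) (by norm_num)).toIsometryEquiv
  | 1 => (affA (-1) 0 0 (-1) 4 1 (by norm_num) (by norm_num) (by norm_num)).toIsometryEquiv
  | 2 => (affA (-s2) s2 (-s2) (-s2) 2 1 hg2a hg2b hg2c).toIsometryEquiv
  | 3 => (affA (-1) 0 0 1 2 1 (by norm_num) (by norm_num) (by norm_num)).toIsometryEquiv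
  | 4 => (affA 1 0 0 1 2 1 (by norm_num) (by norm_num) (by norm_num)).toIsometryEquiv
  | 5 => (affA 1 0 0 1 0 0 (by norm_num) (by norm_num) (by norm_num)).toIsometryEquiv
  | 6 => (affA (-1) 0 0 1 4 0 (by norm_num) (by norm_num) (by norm_num)).toIsometryEquiv

lemma himg0 : g 0 '' tanPiece 0 = convexHull ℝ ({pt 1 1, pt 2 1, pt 1 0} : Set Plane) := by
  show (affA 1 0 0 (-1) 1 1 _ _ _).toIsometryEquiv ''
    (convexHull ℝ {pt 0 0, pt 1 0, pt 0 1}) = _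
  rw [affA_image_hull]
  congr 1
  rw [Set.image_insert_eq, Set.image_insert_eq, Set.image_singleton,
    affA_apply, affA_apply, affA_apply]
  norm_num

lemma himg1 : g 1 '' tanPiece 1 = convexHull ℝ ({pt 4 1, pt 3 1, pt 4 0} : Set Plane) := by
  show (affA (-1) 0 0 (-1) 4 1 _ _ _).toIsometryEquiv ''
    (convexHull ℝ {pt 0 0, pt 1 0, pt 0 1}) = _
  rw [affA_image_hull]
  congr 1
  rw [Set.image_insert_eq, Set.image_insert_eq, Set.image_singleton,
    affA_apply, affA_apply, affA_apply]
  norm_num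

lemma himg2 : g 2 '' tanPiece 2 = convexHull ℝ ({pt 2 1, pt 1 0, pt 3 0} : Set Plane) := by
  show (affA (-s2) s2 (-s2) (-s2) 2 1 _ _ _).toIsometryEquiv ''
    (convexHull ℝ {pt 0 0, pt (Real.sqrt 2) 0, pt 0 (Real.sqrt 2)}) = _
  rw [affA_image_hull]
  congr 1
  rw [Set.image_insert_eq, Set.image_insert_eq, Set.image_singleton,
    affA_apply, affA_apply, affA_apply]
  norm_num [s2_mul_sqrt, neg_mul]

lemma himg3 : g 3 '' tanPiece 3 = convexHull ℝ ({pt 2 1, pt 0 1, pt 2 3} : Set Plane) := by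
  show (affA (-1) 0 0 1 2 1 _ _ _).toIsometryEquiv ''
    (convexHull ℝ {pt 0 0, pt 2 0, pt 0 2}) = _
  rw [affA_image_hull]
  congr 1
  rw [Set.image_insert_eq, Set.image_insert_eq, Set.image_singleton,
    affA_apply, affA_apply, affA_apply]
  norm_num

lemma himg4 : g 4 '' tanPiece 4 = convexHull ℝ ({pt 2 1, pt 4 1, pt 2 3} : Set Plane) := by
  show (affA 1 0 0 1 2 1 _ _ _).toIsometryEquiv ''
    (convexHull ℝ {pt 0 0, pt 2 0, pt 0 2}) = _
  rw [affA_image_hull]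
  congr 1
  rw [Set.image_insert_eq, Set.image_insert_eq, Set.image_singleton,
    affA_apply, affA_apply, affA_apply]
  norm_num

lemma himg5 : g 5 '' tanPiece 5
    = convexHull ℝ ({pt 0 0, pt 1 0, pt 1 1, pt 0 1} : Set Plane) := by
  show (affA 1 0 0 1 0 0 _ _ _).toIsometryEquiv ''
    (convexHull ℝ {pt 0 0, pt 1 0, pt 1 1, pt 0 1}) = _
  rw [affA_image_hull]
  congr 1
  rw [Set.image_insert_eq, Set.image_insert_eq, Set.image_insert_eq, Set.image_singleton,
    affA_apply, affA_apply, affA_apply, affA_apply]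
  norm_num

lemma himg6 : g 6 '' tanPiece 6
    = convexHull ℝ ({pt 4 0, pt 3 0, pt 2 1, pt 3 1} : Set Plane) := by
  show (affA (-1) 0 0 1 4 0 _ _ _).toIsometryEquiv ''
    (convexHull ℝ {pt 0 0, pt 1 0, pt 2 1, pt 1 1}) = _
  rw [affA_image_hull]
  congr 1
  rw [Set.image_insert_eq, Set.image_insert_eq, Set.image_insert_eq, Set.image_singleton,
    affA_apply, affA_apply, affA_apply, affA_apply]
  norm_num

end TangramAux

namespace TangramAux

def pentV : Set Plane := {pt 0 0, pt 4 0, pt 4 1, pt 2 3, pt 0 1}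
def pent : Set Plane := convexHull ℝ pentV

lemma memA : pt 0 0 ∈ pent := subset_convexHull ℝ _ (by simp [pentV])
lemma memB : pt 4 0 ∈ pent := subset_convexHull ℝ _ (by simp [pentV])
lemma memC : pt 4 1 ∈ pent := subset_convexHull ℝ _ (by simp [pentV])
lemma memD : pt 2 3 ∈ pent := subset_convexHull ℝ _ (by simp [pentV])
lemma memE : pt 0 1 ∈ pent := subset_convexHull ℝ _ (by simp [pentV])

lemma seg_mem {x y : Plane} (hx : x ∈ pentV) (hy : y ∈ pentV) {a b : ℝ} {z : Plane}
    (ha : 0 ≤ a) (hb : 0 ≤ b) (hs : a + b = 1) (hz : a•x + b•y = z) : z ∈ pent := by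
  have := segment_subset_convexHull hx hy (mem_seg ha hb hs)
  rwa [hz] at this

lemma mem10 : pt 1 0 ∈ pent := by
  refine seg_mem (x := pt 0 0) (y := pt 4 0) (by simp [pentV]) (by simp [pentV])
    (a := (3:ℝ)/4) (b := (1:ℝ)/4) (by norm_num) (by norm_num) (by norm_num) ?_
  rw [pt_smul, pt_smul, pt_add]; norm_num

lemma mem30 : pt 3 0 ∈ pent := by
  refine seg_mem (x := pt 0 0) (y := pt 4 0) (by simp [pentV]) (by simp [pentV])
    (a := (1:ℝ)/4) (b := (3:ℝ)/4) (by norm_num) (by norm_num) (by norm_num) ?_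
  rw [pt_smul, pt_smul, pt_add]; norm_num

lemma mem11 : pt 1 1 ∈ pent := by
  refine seg_mem (x := pt 0 1) (y := pt 4 1) (by simp [pentV]) (by simp [pentV])
    (a := (3:ℝ)/4) (b := (1:ℝ)/4) (by norm_num) (by norm_num) (by norm_num) ?_
  rw [pt_smul, pt_smul, pt_add]; norm_num

lemma mem21 : pt 2 1 ∈ pent := by
  refine seg_mem (x := pt 0 1) (y := pt 4 1) (by simp [pentV]) (by simp [pentV])
    (a := (1:ℝ)/2) (b := (1:ℝ)/2) (by norm_num) (by norm_num) (by norm_num) ?_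
  rw [pt_smul, pt_smul, pt_add]; norm_num

lemma mem31 : pt 3 1 ∈ pent := by
  refine seg_mem (x := pt 0 1) (y := pt 4 1) (by simp [pentV]) (by simp [pentV])
    (a := (1:ℝ)/4) (b := (3:ℝ)/4) (by norm_num) (by norm_num) (by norm_num) ?_
  rw [pt_smul, pt_smul, pt_add]; norm_num

lemma hsub0 : g 0 '' tanPiece 0 ⊆ pent := by
  rw [himg0]
  refine convexHull_min ?_ (convex_convexHull ℝ _)
  intro q hq
  simp only [Set.mem_insert_iff, Set.mem_singleton_iff] at hq
  rcases hq with rfl|rfl|rfl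
  exacts [mem11, mem21, mem10]

lemma hsub1 : g 1 '' tanPiece 1 ⊆ pent := by
  rw [himg1]
  refine convexHull_min ?_ (convex_convexHull ℝ _)
  intro q hq
  simp only [Set.mem_insert_iff, Set.mem_singleton_iff] at hq
  rcases hq with rfl|rfl|rfl
  exacts [memC, mem31, memB]

lemma hsub2 : g 2 '' tanPiece 2 ⊆ pent := by
  rw [himg2]
  refine convexHull_min ?_ (convex_convexHull ℝ _)
  intro q hq
  simp only [Set.mem_insert_iff, Set.mem_singleton_iff] at hq
  rcases hq with rfl|rfl|rfl
  exacts [mem21, mem10, mem30]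

lemma hsub3 : g 3 '' tanPiece 3 ⊆ pent := by
  rw [himg3]
  refine convexHull_min ?_ (convex_convexHull ℝ _)
  intro q hq
  simp only [Set.mem_insert_iff, Set.mem_singleton_iff] at hq
  rcases hq with rfl|rfl|rfl
  exacts [mem21, memE, memD]

lemma hsub4 : g 4 '' tanPiece 4 ⊆ pent := by
  rw [himg4]
  refine convexHull_min ?_ (convex_convexHull ℝ _)
  intro q hq
  simp only [Set.mem_insert_iff, Set.mem_singleton_iff] at hq
  rcases hq with rfl|rfl|rfl
  exacts [mem21, memC, memD]

lemma hsub5 : g 5 '' tanPiece 5 ⊆ pent := by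
  rw [himg5]
  refine convexHull_min ?_ (convex_convexHull ℝ _)
  intro q hq
  simp only [Set.mem_insert_iff, Set.mem_singleton_iff] at hq
  rcases hq with rfl|rfl|rfl|rfl
  exacts [memA, mem10, mem11, memE]

lemma hsub6 : g 6 '' tanPiece 6 ⊆ pent := by
  rw [himg6]
  refine convexHull_min ?_ (convex_convexHull ℝ _)
  intro q hq
  simp only [Set.mem_insert_iff, Set.mem_singleton_iff] at hq
  rcases hq with rfl|rfl|rfl|rfl
  exacts [memB, mem30, mem21, mem31]

end TangramAux

namespace TangramAux

lemma forall3_le {u v c x1 y1 x2 y2 x3 y3 : ℝ} (h1 : u*x1+v*y1 ≤ c) (h2 : u*x2+v*y2 ≤ c)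
    (h3 : u*x3+v*y3 ≤ c) :
    ∀ p ∈ ({pt x1 y1, pt x2 y2, pt x3 y3} : Set Plane), lin u v p ≤ c := by
  intro q hq
  simp only [Set.mem_insert_iff, Set.mem_singleton_iff] at hq
  rcases hq with rfl|rfl|rfl <;> rw [lin_pt] <;> assumption

lemma forall3_ge {u v c x1 y1 x2 y2 x3 y3 : ℝ} (h1 : c ≤ u*x1+v*y1) (h2 : c ≤ u*x2+v*y2)
    (h3 : c ≤ u*x3+v*y3) :
    ∀ p ∈ ({pt x1 y1, pt x2 y2, pt x3 y3} : Set Plane), c ≤ lin u v p := by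
  intro q hq
  simp only [Set.mem_insert_iff, Set.mem_singleton_iff] at hq
  rcases hq with rfl|rfl|rfl <;> rw [lin_pt] <;> assumption

lemma forall4_le {u v c x1 y1 x2 y2 x3 y3 x4 y4 : ℝ} (h1 : u*x1+v*y1 ≤ c) (h2 : u*x2+v*y2 ≤ c)
    (h3 : u*x3+v*y3 ≤ c) (h4 : u*x4+v*y4 ≤ c) :
    ∀ p ∈ ({pt x1 y1, pt x2 y2, pt x3 y3, pt x4 y4} : Set Plane), lin u v p ≤ c := by
  intro q hq
  simp only [Set.mem_insert_iff, Set.mem_singleton_iff] at hq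
  rcases hq with rfl|rfl|rfl|rfl <;> rw [lin_pt] <;> assumption

lemma forall4_ge {u v c x1 y1 x2 y2 x3 y3 x4 y4 : ℝ} (h1 : c ≤ u*x1+v*y1) (h2 : c ≤ u*x2+v*y2)
    (h3 : c ≤ u*x3+v*y3) (h4 : c ≤ u*x4+v*y4) :
    ∀ p ∈ ({pt x1 y1, pt x2 y2, pt x3 y3, pt x4 y4} : Set Plane), c ≤ lin u v p := by
  intro q hq
  simp only [Set.mem_insert_iff, Set.mem_singleton_iff] at hq
  rcases hq with rfl|rfl|rfl|rfl <;> rw [lin_pt] <;> assumption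

lemma forall5_le {u v c x1 y1 x2 y2 x3 y3 x4 y4 x5 y5 : ℝ} (h1 : u*x1+v*y1 ≤ c)
    (h2 : u*x2+v*y2 ≤ c) (h3 : u*x3+v*y3 ≤ c) (h4 : u*x4+v*y4 ≤ c) (h5 : u*x5+v*y5 ≤ c) :
    ∀ p ∈ ({pt x1 y1, pt x2 y2, pt x3 y3, pt x4 y4, pt x5 y5} : Set Plane), lin u v p ≤ c := by
  intro q hq
  simp only [Set.mem_insert_iff, Set.mem_singleton_iff] at hq
  rcases hq with rfl|rfl|rfl|rfl|rfl <;> rw [lin_pt] <;> assumption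

lemma pent_subset_union : pent ⊆ ⋃ i, g i '' tanPiece i := by
  intro p hp
  have b1 : lin (-1) 0 p ≤ 0 := hull_subset_hs (-1) 0 0
    (forall5_le (by norm_num) (by norm_num) (by norm_num) (by norm_num) (by norm_num)) hp
  have b2 : lin 0 (-1) p ≤ 0 := hull_subset_hs 0 (-1) 0
    (forall5_le (by norm_num) (by norm_num) (by norm_num) (by norm_num) (by norm_num)) hp
  have b3 : lin 1 0 p ≤ 4 := hull_subset_hs 1 0 4
    (forall5_le (by norm_num) (by norm_num) (by norm_num) (by norm_num) (by norm_num)) hp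
  have b4 : lin 1 1 p ≤ 5 := hull_subset_hs 1 1 5
    (forall5_le (by norm_num) (by norm_num) (by norm_num) (by norm_num) (by norm_num)) hp
  have b5 : lin (-1) 1 p ≤ 1 := hull_subset_hs (-1) 1 1
    (forall5_le (by norm_num) (by norm_num) (by norm_num) (by norm_num) (by norm_num)) hp
  simp only [lin] at b1 b2 b3 b4 b5
  rw [Set.mem_iUnion]
  by_cases hy1 : 1 ≤ p 1
  · by_cases hx2 : p 0 ≤ 2
    · exact ⟨3, by rw [himg3]; exact memH3 hy1 (by linarith) hx2⟩
    · exact ⟨4, by rw [himg4]; exact memH4 (by linarith) hy1 (by linarith)⟩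
  · have hy1' : p 1 ≤ 1 := le_of_not_ge hy1
    by_cases hx1 : p 0 ≤ 1
    · exact ⟨5, by rw [himg5]; exact memH5 (by linarith) hx1 (by linarith) hy1'⟩
    · have hx1' : 1 ≤ p 0 := le_of_not_ge hx1
      by_cases h3 : p 0 + p 1 ≤ 3
      · by_cases hxy : p 1 ≤ p 0 - 1
        · exact ⟨2, by rw [himg2]; exact memH2 (by linarith) hxy h3⟩
        · exact ⟨0, by rw [himg0]; exact memH0 hx1' hy1' (by linarith [le_of_not_ge hxy])⟩
      · by_cases h4 : p 0 + p 1 ≤ 4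
        · exact ⟨6, by rw [himg6]; exact memH6 (by linarith) hy1' (by linarith) h4⟩
        · exact ⟨1, by rw [himg1]; exact memH1 (by linarith) hy1' (by linarith)⟩

lemma d01 : Disjoint (interior (g 0 '' tanPiece 0)) (interior (g 1 '' tanPiece 1)) := by
  rw [himg0, himg1]
  exact disj_hulls _ _ 1 0 2 (by norm_num)
    (forall3_le (by norm_num) (by norm_num) (by norm_num))
    (forall3_ge (by norm_num) (by norm_num) (by norm_num))
lemma d02 : Disjoint (interior (g 0 '' tanPiece 0)) (interior (g 2 '' tanPiece 2)) := by
  rw [himg0, himg2]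
  exact disj_hulls _ _ 1 (-1) 1 (by norm_num)
    (forall3_le (by norm_num) (by norm_num) (by norm_num))
    (forall3_ge (by norm_num) (by norm_num) (by norm_num))
lemma d03 : Disjoint (interior (g 0 '' tanPiece 0)) (interior (g 3 '' tanPiece 3)) := by
  rw [himg0, himg3]
  exact disj_hulls _ _ 0 1 1 (by norm_num)
    (forall3_le (by norm_num) (by norm_num) (by norm_num))
    (forall3_ge (by norm_num) (by norm_num) (by norm_num))
lemma d04 : Disjoint (interior (g 0 '' tanPiece 0)) (interior (g 4 '' tanPiece 4)) := by
  rw [himg0, himg4]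
  exact disj_hulls _ _ 0 1 1 (by norm_num)
    (forall3_le (by norm_num) (by norm_num) (by norm_num))
    (forall3_ge (by norm_num) (by norm_num) (by norm_num))
lemma d05 : Disjoint (interior (g 0 '' tanPiece 0)) (interior (g 5 '' tanPiece 5)) := by
  rw [himg0, himg5]
  exact disj_hulls _ _ (-1) 0 (-1) (by norm_num)
    (forall3_le (by norm_num) (by norm_num) (by norm_num))
    (forall4_ge (by norm_num) (by norm_num) (by norm_num) (by norm_num))
lemma d06 : Disjoint (interior (g 0 '' tanPiece 0)) (interior (g 6 '' tanPiece 6)) := by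
  rw [himg0, himg6]
  exact disj_hulls _ _ 1 1 3 (by norm_num)
    (forall3_le (by norm_num) (by norm_num) (by norm_num))
    (forall4_ge (by norm_num) (by norm_num) (by norm_num) (by norm_num))
lemma d12 : Disjoint (interior (g 1 '' tanPiece 1)) (interior (g 2 '' tanPiece 2)) := by
  rw [himg1, himg2]
  exact disj_hulls _ _ (-1) (-1) (-4) (by norm_num)
    (forall3_le (by norm_num) (by norm_num) (by norm_num))
    (forall3_ge (by norm_num) (by norm_num) (by norm_num))
lemma d13 : Disjoint (interior (g 1 '' tanPiece 1)) (interior (g 3 '' tanPiece 3)) := by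
  rw [himg1, himg3]
  exact disj_hulls _ _ (-1) 0 (-3) (by norm_num)
    (forall3_le (by norm_num) (by norm_num) (by norm_num))
    (forall3_ge (by norm_num) (by norm_num) (by norm_num))
lemma d14 : Disjoint (interior (g 1 '' tanPiece 1)) (interior (g 4 '' tanPiece 4)) := by
  rw [himg1, himg4]
  exact disj_hulls _ _ 0 1 1 (by norm_num)
    (forall3_le (by norm_num) (by norm_num) (by norm_num))
    (forall3_ge (by norm_num) (by norm_num) (by norm_num))
lemma d15 : Disjoint (interior (g 1 '' tanPiece 1)) (interior (g 5 '' tanPiece 5)) := by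
  rw [himg1, himg5]
  exact disj_hulls _ _ (-1) 0 (-3) (by norm_num)
    (forall3_le (by norm_num) (by norm_num) (by norm_num))
    (forall4_ge (by norm_num) (by norm_num) (by norm_num) (by norm_num))
lemma d16 : Disjoint (interior (g 1 '' tanPiece 1)) (interior (g 6 '' tanPiece 6)) := by
  rw [himg1, himg6]
  exact disj_hulls _ _ (-1) (-1) (-4) (by norm_num)
    (forall3_le (by norm_num) (by norm_num) (by norm_num))
    (forall4_ge (by norm_num) (by norm_num) (by norm_num) (by norm_num))
lemma d23 : Disjoint (interior (g 2 '' tanPiece 2)) (interior (g 3 '' tanPiece 3)) := by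
  rw [himg2, himg3]
  exact disj_hulls _ _ 0 1 1 (by norm_num)
    (forall3_le (by norm_num) (by norm_num) (by norm_num))
    (forall3_ge (by norm_num) (by norm_num) (by norm_num))
lemma d24 : Disjoint (interior (g 2 '' tanPiece 2)) (interior (g 4 '' tanPiece 4)) := by
  rw [himg2, himg4]
  exact disj_hulls _ _ 0 1 1 (by norm_num)
    (forall3_le (by norm_num) (by norm_num) (by norm_num))
    (forall3_ge (by norm_num) (by norm_num) (by norm_num))
lemma d25 : Disjoint (interior (g 2 '' tanPiece 2)) (interior (g 5 '' tanPiece 5)) := by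
  rw [himg2, himg5]
  exact disj_hulls _ _ (-1) 0 (-1) (by norm_num)
    (forall3_le (by norm_num) (by norm_num) (by norm_num))
    (forall4_ge (by norm_num) (by norm_num) (by norm_num) (by norm_num))
lemma d26 : Disjoint (interior (g 2 '' tanPiece 2)) (interior (g 6 '' tanPiece 6)) := by
  rw [himg2, himg6]
  exact disj_hulls _ _ 1 1 3 (by norm_num)
    (forall3_le (by norm_num) (by norm_num) (by norm_num))
    (forall4_ge (by norm_num) (by norm_num) (by norm_num) (by norm_num))
lemma d34 : Disjoint (interior (g 3 '' tanPiece 3)) (interior (g 4 '' tanPiece 4)) := by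
  rw [himg3, himg4]
  exact disj_hulls _ _ 1 0 2 (by norm_num)
    (forall3_le (by norm_num) (by norm_num) (by norm_num))
    (forall3_ge (by norm_num) (by norm_num) (by norm_num))
lemma d35 : Disjoint (interior (g 3 '' tanPiece 3)) (interior (g 5 '' tanPiece 5)) := by
  rw [himg3, himg5]
  exact disj_hulls _ _ 0 (-1) (-1) (by norm_num)
    (forall3_le (by norm_num) (by norm_num) (by norm_num))
    (forall4_ge (by norm_num) (by norm_num) (by norm_num) (by norm_num))
lemma d36 : Disjoint (interior (g 3 '' tanPiece 3)) (interior (g 6 '' tanPiece 6)) := by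
  rw [himg3, himg6]
  exact disj_hulls _ _ 0 (-1) (-1) (by norm_num)
    (forall3_le (by norm_num) (by norm_num) (by norm_num))
    (forall4_ge (by norm_num) (by norm_num) (by norm_num) (by norm_num))
lemma d45 : Disjoint (interior (g 4 '' tanPiece 4)) (interior (g 5 '' tanPiece 5)) := by
  rw [himg4, himg5]
  exact disj_hulls _ _ 0 (-1) (-1) (by norm_num)
    (forall3_le (by norm_num) (by norm_num) (by norm_num))
    (forall4_ge (by norm_num) (by norm_num) (by norm_num) (by norm_num))
lemma d46 : Disjoint (interior (g 4 '' tanPiece 4)) (interior (g 6 '' tanPiece 6)) := by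
  rw [himg4, himg6]
  exact disj_hulls _ _ 0 (-1) (-1) (by norm_num)
    (forall3_le (by norm_num) (by norm_num) (by norm_num))
    (forall4_ge (by norm_num) (by norm_num) (by norm_num) (by norm_num))
lemma d56 : Disjoint (interior (g 5 '' tanPiece 5)) (interior (g 6 '' tanPiece 6)) := by
  rw [himg5, himg6]
  exact disj_hulls _ _ 1 0 1 (by norm_num)
    (forall4_le (by norm_num) (by norm_num) (by norm_num) (by norm_num))
    (forall4_ge (by norm_num) (by norm_num) (by norm_num) (by norm_num))

end TangramAux

open TangramAux

/-- The convex pentagon with vertices (0,0), (4,0), (4,1), (2,3), (0,1) is a tangram. -/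
theorem convex_pentagon_one_is_tangram :
    IsTangram (convexHull ℝ {pt 0 0, pt 4 0, pt 4 1, pt 2 3, pt 0 1}) := by
  refine ⟨g, ?_, ?_⟩
  · apply Set.eq_of_subset_of_subset
    · exact pent_subset_union
    · intro p hp
      rw [Set.mem_iUnion] at hp
      obtain ⟨i, hi⟩ := hp
      fin_cases i
      · exact hsub0 hi
      · exact hsub1 hi
      · exact hsub2 hi
      · exact hsub3 hi
      · exact hsub4 hi
      · exact hsub5 hi
      · exact hsub6 hi
  · intro i j hij
    fin_cases i <;> fin_cases j
    · exact absurd rfl hij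
    · exact d01
    · exact d02
    · exact d03
    · exact d04
    · exact d05
    · exact d06
    · exact (d01).symm
    · exact absurd rfl hij
    · exact d12
    · exact d13
    · exact d14
    · exact d15
    · exact d16
    · exact (d02).symm
    · exact (d12).symm
    · exact absurd rfl hij
    · exact d23
    · exact d24
    · exact d25
    · exact d26
    · exact (d03).symm
    · exact (d13).symm
    · exact (d23).symm
    · exact absurd rfl hij
    · exact d34
    · exact d35
    · exact d36
    · exact (d04).symm
    · exact (d14).symm
    · exact (d24).symm
    · exact (d34).symm
    · exact absurd rfl hij
    · exact d45
    · exact d46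
    · exact (d05).symm
    · exact (d15).symm
    · exact (d25).symm
    · exact (d35).symm
    · exact (d45).symm
    · exact absurd rfl hij
    · exact d56
    · exact (d06).symm
    · exact (d16).symm
    · exact (d26).symm
    · exact (d36).symm
    · exact (d46).symm
    · exact (d56).symm
    · exact absurd rfl hij
end
end

section
/- There do not exist nonnegative integers k, l, m, n such that the real numbers ξ = k + l·√2 and η = m + n·√2 satisfy ξ ≥ η > ξ/√2 and 8 = (1/2)·(ξ/√2)² + (1/2)·(η − ξ/√2)². -/
set_option maxHeartbeats 1000000

theorem aux_sqle (x : ℤ) (h : x^2 ≤ 16) : x ≤ 4 := by nlinarith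

theorem aux_tangram_enum : ∀ k : Fin 9, ∀ l : Fin 5, ∀ m : Fin 9, ∀ n : Fin 5,
    k.1*k.1+2*(l.1*l.1)+m.1*m.1+2*(n.1*n.1) = 16+2*(k.1*n.1)+2*(l.1*m.1) →
    2*(k.1*l.1)+2*(m.1*n.1) = k.1*m.1+2*(l.1*n.1) →
    (k.1 = 0 ∧ l.1 = 0 ∧ m.1 = 4 ∧ n.1 = 0) ∨ (k.1 = 0 ∧ l.1 = 4 ∧ m.1 = 4 ∧ n.1 = 0) ∨
    (k.1 = 4 ∧ l.1 = 0 ∧ m.1 = 0 ∧ n.1 = 0) ∨ (k.1 = 4 ∧ l.1 = 0 ∧ m.1 = 0 ∧ n.1 = 4) := by decide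

/-- There are no nonnegative integers `k, l, m, n` such that `ξ = k + l√2` and
`η = m + n√2` satisfy `ξ ≥ η > ξ/√2` and `8 = (1/2)(ξ/√2)² + (1/2)(η − ξ/√2)²`. -/
theorem no_side_lengths_solution :
    ¬ ∃ k l m n : ℕ,
      (k : ℝ) + l * Real.sqrt 2 ≥ (m : ℝ) + n * Real.sqrt 2 ∧
      (m : ℝ) + n * Real.sqrt 2 > ((k : ℝ) + l * Real.sqrt 2) / Real.sqrt 2 ∧
      (8 : ℝ) = (1 / 2) * (((k : ℝ) + l * Real.sqrt 2) / Real.sqrt 2) ^ 2 +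
        (1 / 2) * (((m : ℝ) + n * Real.sqrt 2) -
          ((k : ℝ) + l * Real.sqrt 2) / Real.sqrt 2) ^ 2 := by
  rintro ⟨k, l, m, n, h1, h2, h3⟩
  set s : ℝ := Real.sqrt 2 with hs
  have hs2 : s * s = 2 := Real.mul_self_sqrt (by norm_num)
  have hs0 : (0:ℝ) < s := Real.sqrt_pos.mpr (by norm_num)
  have hs1 : (1:ℝ) < s := by nlinarith
  -- Clear denominators in h3
  have key : (16:ℝ) = ((k:ℝ) + l*s)^2 + ((m:ℝ) + n*s)^2
      - ((m:ℝ) + n*s) * ((k:ℝ) + l*s) * s := by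
    have h3' := h3
    field_simp at h3'
    nlinarith [h3', hs2, hs0]
  -- Separate rational and irrational parts
  set a : ℤ := (k:ℤ)^2 + 2*l^2 + m^2 + 2*n^2 - 2*k*n - 2*l*m - 16 with ha
  set b : ℤ := 2*k*l + 2*m*n - k*m - 2*l*n with hb
  have habs : (a:ℝ) + (b:ℝ) * s = 0 := by
    push_cast [ha, hb]
    linear_combination (-1:ℝ)*key + ((k:ℝ)*n + (l:ℝ)*m - (l:ℝ)^2 - (n:ℝ)^2 + (l:ℝ)*n*s)*hs2
  have hb0 : b = 0 := by
    by_contra hbne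
    have hbne' : ((b:ℤ):ℝ) ≠ 0 := Int.cast_ne_zero.mpr hbne
    have hsr : s = ((-a : ℤ):ℝ) / ((b:ℤ):ℝ) := by
      push_cast
      field_simp
      linarith [habs]
    refine irrational_sqrt_two ⟨(-a : ℚ)/(b : ℚ), ?_⟩
    rw [← hs, hsr]
    push_cast
    ring
  have ha0 : a = 0 := by
    rw [hb0] at habs
    push_cast at habs
    have : (a:ℝ) = 0 := by linarith
    exact_mod_cast this
  -- Integer equations
  have hA : (k:ℤ)^2 + 2*l^2 + m^2 + 2*n^2 - 2*k*n - 2*l*m = 16 := by omega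
  have hB : (2*k*l + 2*m*n : ℤ) = k*m + 2*l*n := by omega
  have hsq : ((k:ℤ) - n)^2 + ((m:ℤ) - l)^2 + l^2 + n^2 = 16 := by linear_combination hA
  -- Bounds
  have hlz : (l:ℤ) ≤ 4 := aux_sqle _ (by linarith [hsq, sq_nonneg ((k:ℤ) - n), sq_nonneg ((m:ℤ) - l), sq_nonneg (n:ℤ)])
  have hnz : (n:ℤ) ≤ 4 := aux_sqle _ (by linarith [hsq, sq_nonneg ((k:ℤ) - n), sq_nonneg ((m:ℤ) - l), sq_nonneg (l:ℤ)])
  have hknz : (k:ℤ) - n ≤ 4 := aux_sqle _ (by linarith [hsq, sq_nonneg ((m:ℤ) - l), sq_nonneg (l:ℤ), sq_nonneg (n:ℤ)])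
  have hmlz : (m:ℤ) - l ≤ 4 := aux_sqle _ (by linarith [hsq, sq_nonneg ((k:ℤ) - n), sq_nonneg (l:ℤ), sq_nonneg (n:ℤ)])
  have hl4 : l < 5 := by omega
  have hn4 : n < 5 := by omega
  have hk8 : k < 9 := by omega
  have hm8 : m < 9 := by omega
  -- Nat equations
  have hAn : k*k+2*(l*l)+m*m+2*(n*n) = 16+2*(k*n)+2*(l*m) := by
    zify; linear_combination hA
  have hBn : 2*(k*l)+2*(m*n) = k*m+2*(l*n) := by
    zify; linear_combination hB
  -- Real inequalities in linear form
  have p1 : (k:ℝ) + l*s ≥ (m:ℝ) + n*s := h1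
  have p2 : (m:ℝ)*s + 2*n > (k:ℝ) + l*s := by
    have := (div_lt_iff₀ hs0).mp h2
    nlinarith [this, hs2]
  rcases aux_tangram_enum ⟨k, hk8⟩ ⟨l, hl4⟩ ⟨m, hm8⟩ ⟨n, hn4⟩ hAn hBn with
    ⟨rfl, rfl, rfl, rfl⟩ | ⟨rfl, rfl, rfl, rfl⟩ | ⟨rfl, rfl, rfl, rfl⟩ | ⟨rfl, rfl, rfl, rfl⟩ <;>
    push_cast at p1 p2 <;> linarith
end
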